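/- arXiv:2206.02137 — 7 statements merged into one kernel-verified Lean document; each statement's English description precedes it below -/
import Mathlib

section
/- Let a, b > 0 and let g be the inverse Gaussian density g(t) = sqrt(a/(2π t³)) · exp(−a(t−b)²/(2b²t)) for t > 0. Then for every real λ with λ ≥ −a/(2b²), the Laplace transform of g satisfies ∫₀^∞ e^{−λt} g(t) dt = exp( (a/b) · (1 − sqrt(1 + 2b²λ/a)) ). -/
/-!
Substituting `t = x⁻²` turns the Laplace transform of `IG(a, b)` at `λ` into a constant multiple
of `∫₀^∞ exp (-(A x² + B / x²)) dx` with `A = a / 2` and `B = λ + a / (2 b²) ≥ 0`. Completing the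
square, `A x² + B / x² = (√A x - √B / x)² + 2 √(A B)`, and the Cauchy–Schlömilch substitution
`u = √A x - √B / x` reduces the remaining integral to the Gaussian one: the involution
`x ↦ √(B / A) / x` of `(0, ∞)` shows that `∫₀^∞ (√A + √B / x²) e^{-u²} dx = √π` is twice
`√A ∫₀^∞ e^{-u²} dx`.
-/

open MeasureTheory Real

/-- The inverse Gaussian density `IG(a,b)`: the first-passage-time density of a
geometric Brownian motion through a constant boundary. -/
noncomputable def ig (a b t : ℝ) : ℝ :=
  Real.sqrt (a / (2 * Real.pi * t ^ 3)) * Real.exp (-(a * (t - b) ^ 2) / (2 * b ^ 2 * t))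

open Set

section Substitutions

variable {E : Type*} [NormedAddCommGroup E] [NormedSpace ℝ E]

theorem integral_Ioi_comp_div (h : ℝ → E) {c : ℝ} (hc : 0 < c) :
    ∫ x in Ioi 0, (c / x ^ 2) • h (c / x) = ∫ x in Ioi 0, h x := by
  have key := integral_comp_rpow_Ioi (fun y => h (c * y)) (p := -1) (by norm_num)
  rw [integral_comp_mul_left_Ioi h 0 hc, mul_zero] at key
  rw [← smul_inv_smul₀ hc.ne' (∫ x in Ioi 0, h x), ← key, ← integral_smul]
  refine setIntegral_congr_fun measurableSet_Ioi fun x hx => ?_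
  have hx : 0 < x := hx
  norm_num [smul_smul, Real.rpow_neg hx.le, div_eq_mul_inv]

theorem integral_Ioi_comp_inv_sq (g : ℝ → E) :
    ∫ x in Ioi 0, (2 / x ^ 3) • g (x ^ 2)⁻¹ = ∫ t in Ioi 0, g t := by
  rw [← integral_comp_rpow_Ioi g (p := -2) (by norm_num)]
  refine setIntegral_congr_fun measurableSet_Ioi fun x hx => ?_
  norm_num [Real.rpow_neg (le_of_lt hx), div_eq_mul_inv]

theorem hasDerivAt_mul_sub_div (α β : ℝ) {x : ℝ} (hx : x ≠ 0) :
    HasDerivAt (fun x => α * x - β / x) (α + β / x ^ 2) x := by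
  have h : HasDerivAt (fun y => α * y - β * y⁻¹) (α * 1 - β * -(x ^ 2)⁻¹) x :=
    ((hasDerivAt_id' x).const_mul α).sub ((hasDerivAt_inv hx).const_mul β)
  simp only [← div_eq_mul_inv] at h
  exact h.congr_deriv (by ring)

variable {α β : ℝ}

theorem strictMonoOn_mul_sub_div (hα : 0 < α) (hβ : 0 ≤ β) :
    StrictMonoOn (fun x => α * x - β / x) (Ioi 0) := by
  intro x hx y hy hxy
  have : β / y ≤ β / x := div_le_div_of_nonneg_left hβ hx hxy.le
  dsimp only
  nlinarith

theorem image_mul_sub_div_Ioi (hα : 0 < α) (hβ : 0 < β) :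
    (fun x => α * x - β / x) '' Ioi 0 = univ := by
  refine eq_univ_of_forall fun y => ?_
  -- the positive root of `α x ^ 2 - y x - β`
  set s := √(y ^ 2 + 4 * α * β)
  have hs : s ^ 2 = y ^ 2 + 4 * α * β := sq_sqrt (by positivity)
  have hys : 0 < y + s := by nlinarith [sqrt_nonneg (y ^ 2 + 4 * α * β), mul_pos hα hβ]
  refine ⟨(y + s) / (2 * α), div_pos hys (by positivity), ?_⟩
  field_simp
  nlinarith

theorem integral_Ioi_mul_sub_div (hα : 0 < α) (hβ : 0 < β) (g : ℝ → E) :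
    ∫ x in Ioi 0, (α + β / x ^ 2) • g (α * x - β / x) = ∫ y, g y := by
  calc ∫ x in Ioi 0, (α + β / x ^ 2) • g (α * x - β / x)
      = ∫ x in Ioi 0, |α + β / x ^ 2| • g (α * x - β / x) :=
        setIntegral_congr_fun measurableSet_Ioi fun x _ => by rw [abs_of_pos (by positivity)]
    _ = ∫ y in (fun x => α * x - β / x) '' Ioi 0, g y :=
        (integral_image_eq_integral_abs_deriv_smul measurableSet_Ioi
          (fun x hx => (hasDerivAt_mul_sub_div α β (ne_of_gt hx)).hasDerivWithinAt)
          (strictMonoOn_mul_sub_div hα hβ.le).injOn g).symm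
    _ = ∫ y, g y := by rw [image_mul_sub_div_Ioi hα hβ, setIntegral_univ]

theorem integrableOn_Ioi_mul_sub_div (hα : 0 < α) (hβ : 0 < β) {g : ℝ → E}
    (hg : Integrable g) :
    IntegrableOn (fun x => (α + β / x ^ 2) • g (α * x - β / x)) (Ioi 0) := by
  have h := (integrableOn_image_iff_integrableOn_abs_deriv_smul measurableSet_Ioi
      (fun x hx => (hasDerivAt_mul_sub_div α β (ne_of_gt hx)).hasDerivWithinAt)
      (strictMonoOn_mul_sub_div hα hβ.le).injOn g).mp
    (by rw [image_mul_sub_div_Ioi hα hβ]; exact hg.integrableOn)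
  refine h.congr_fun (fun x _ => ?_) measurableSet_Ioi
  dsimp only
  rw [abs_of_pos (by positivity)]

theorem integrableOn_Ioi_comp_mul_sub_div (hα : 0 < α) (hβ : 0 < β) {g : ℝ → E}
    (hg : Integrable g) :
    IntegrableOn (fun x => g (α * x - β / x)) (Ioi 0) := by
  have h : IntegrableOn (fun x => (α + β / x ^ 2)⁻¹ • (α + β / x ^ 2) • g (α * x - β / x))
      (Ioi 0) := (integrableOn_Ioi_mul_sub_div hα hβ hg).bdd_smul α⁻¹
    (by fun_prop : Measurable fun x : ℝ => (α + β / x ^ 2)⁻¹).aestronglyMeasurable ?_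
  · refine h.congr_fun (fun x _ => ?_) measurableSet_Ioi
    exact inv_smul_smul₀ (ne_of_gt (by positivity)) _
  · filter_upwards [ae_restrict_mem measurableSet_Ioi] with x hx
    rw [norm_inv, Real.norm_of_nonneg (by positivity)]
    exact inv_anti₀ hα (by simp only [le_add_iff_nonneg_right]; positivity)

theorem integral_Ioi_comp_mul_sub_div_of_even (hα : 0 < α) (hβ : 0 < β) {g : ℝ → E}
    (hg : Integrable g) (heven : ∀ u, g (-u) = g u) :
    ∫ x in Ioi 0, g (α * x - β / x) = (2 * α)⁻¹ • ∫ y, g y := by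
  set J := ∫ x in Ioi 0, g (α * x - β / x)
  -- `x ↦ (β / α) / x` maps `α x - β / x` to its negative
  have hsym : ∫ x in Ioi 0, (β / x ^ 2) • g (α * x - β / x) = α • J := by
    rw [← integral_smul, ← integral_Ioi_comp_div _ (div_pos hβ hα)]
    refine setIntegral_congr_fun measurableSet_Ioi fun x hx => ?_
    have hx : x ≠ 0 := ne_of_gt hx
    have hneg : α * (β / α / x) - β / (β / α / x) = -(α * x - β / x) := by
      field_simp
      ring
    rw [hneg, heven, smul_smul]
    congr 1
    field_simp
  have hrest : ∫ x in Ioi 0, (β / x ^ 2) • g (α * x - β / x) = (∫ y, g y) - α • J := by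
    have hsmul : IntegrableOn (fun x => α • g (α * x - β / x)) (Ioi 0) :=
      (integrableOn_Ioi_comp_mul_sub_div hα hβ hg).smul α
    rw [← integral_Ioi_mul_sub_div hα hβ g, ← integral_smul,
      ← integral_sub (integrableOn_Ioi_mul_sub_div hα hβ hg) hsmul]
    simp only [← sub_smul, add_sub_cancel_left]
  have htotal : ∫ y, g y = (2 * α) • J := by
    rw [two_mul, add_smul, ← sub_eq_iff_eq_add, ← hrest, hsym]
  rw [htotal, smul_smul, inv_mul_cancel₀ (by positivity), one_smul]

end Substitutions

theorem integral_Ioi_exp_neg_mul_sq_add_div_sq {A B : ℝ} (hA : 0 < A) (hB : 0 ≤ B) :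
    ∫ x in Ioi 0, exp (-(A * x ^ 2 + B / x ^ 2)) = √(π / A) / 2 * exp (-(2 * √(A * B))) := by
  rcases hB.eq_or_lt with rfl | hB
  · simpa [← neg_mul] using integral_gaussian_Ioi A
  have hsq : ∀ x : ℝ, x ≠ 0 →
      A * x ^ 2 + B / x ^ 2 = (√A * x - √B / x) ^ 2 + 2 * √(A * B) := by
    intro x hx
    rw [sqrt_mul hA.le]
    field_simp
    linear_combination (-x ^ 4) * sq_sqrt hA.le - sq_sqrt hB.le
  calc ∫ x in Ioi 0, exp (-(A * x ^ 2 + B / x ^ 2))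
      = ∫ x in Ioi 0, exp (-(2 * √(A * B))) * exp (-1 * (√A * x - √B / x) ^ 2) :=
        setIntegral_congr_fun measurableSet_Ioi fun x hx => by
          rw [hsq x (ne_of_gt hx), ← exp_add]; ring_nf
    _ = exp (-(2 * √(A * B))) * ((2 * √A)⁻¹ * ∫ y, exp (-1 * y ^ 2)) := by
        rw [integral_const_mul, integral_Ioi_comp_mul_sub_div_of_even (sqrt_pos.2 hA)
          (sqrt_pos.2 hB) (integrable_exp_neg_mul_sq one_pos) (fun u => by rw [neg_sq]),
          smul_eq_mul]
    _ = √(π / A) / 2 * exp (-(2 * √(A * B))) := by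
        rw [integral_gaussian, div_one, sqrt_div pi_pos.le]
        ring

theorem laplace_integrand_ig_inv_sq (a l : ℝ) {b x : ℝ} (hb : b ≠ 0) (hx : 0 < x) :
    2 / x ^ 3 * (exp (-l * (x ^ 2)⁻¹) * ig a b (x ^ 2)⁻¹) =
      2 * √(a / (2 * π)) * exp (a / b) *
        exp (-(a / 2 * x ^ 2 + (l + a / (2 * b ^ 2)) / x ^ 2)) := by
  have hsqrt : √(a / (2 * π * ((x ^ 2)⁻¹) ^ 3)) = x ^ 3 * √(a / (2 * π)) := by
    rw [show a / (2 * π * ((x ^ 2)⁻¹) ^ 3) = (x ^ 3) ^ 2 * (a / (2 * π)) by field_simp,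
      sqrt_mul (by positivity), sqrt_sq (by positivity)]
  have hexp : -l * (x ^ 2)⁻¹ + -(a * ((x ^ 2)⁻¹ - b) ^ 2) / (2 * b ^ 2 * (x ^ 2)⁻¹) =
      a / b + -(a / 2 * x ^ 2 + (l + a / (2 * b ^ 2)) / x ^ 2) := by
    field_simp
    ring
  rw [ig, hsqrt, mul_assoc _ (exp _), ← exp_add, ← hexp, exp_add]
  field_simp

theorem two_mul_sqrt_half_mul_add {a b : ℝ} (ha : 0 < a) (hb : 0 < b) (l : ℝ) :
    2 * √(a / 2 * (l + a / (2 * b ^ 2))) = a / b * √(1 + 2 * b ^ 2 * l / a) := by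
  rw [← sqrt_sq (by positivity : 0 ≤ a / b), ← sqrt_mul (by positivity),
    ← sqrt_sq (zero_le_two (α := ℝ)), ← sqrt_mul (by positivity), sqrt_sq zero_le_two]
  congr 1
  field_simp
  ring

theorem laplace_transform_ig (a b : ℝ) (ha : 0 < a) (hb : 0 < b) (l : ℝ)
    (hl : -a / (2 * b ^ 2) ≤ l) :
    (∫ t in Set.Ioi (0 : ℝ), Real.exp (-l * t) * ig a b t) =
      Real.exp (a / b * (1 - Real.sqrt (1 + 2 * b ^ 2 * l / a))) := by
  have hp : 0 ≤ l + a / (2 * b ^ 2) := by rw [neg_div] at hl; linarith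
  have hconst : √(a / (2 * π)) * √(π / (a / 2)) = 1 := by
    rw [← sqrt_mul (by positivity), show a / (2 * π) * (π / (a / 2)) = 1 by field_simp, sqrt_one]
  calc ∫ t in Ioi 0, exp (-l * t) * ig a b t
      = ∫ x in Ioi 0, 2 / x ^ 3 * (exp (-l * (x ^ 2)⁻¹) * ig a b (x ^ 2)⁻¹) :=
        (integral_Ioi_comp_inv_sq _).symm
    _ = ∫ x in Ioi 0, 2 * √(a / (2 * π)) * exp (a / b) *
          exp (-(a / 2 * x ^ 2 + (l + a / (2 * b ^ 2)) / x ^ 2)) :=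
        setIntegral_congr_fun measurableSet_Ioi fun _ hx =>
          laplace_integrand_ig_inv_sq a l hb.ne' hx
    _ = 2 * √(a / (2 * π)) * exp (a / b) *
          (√(π / (a / 2)) / 2 * exp (-(2 * √(a / 2 * (l + a / (2 * b ^ 2)))))) := by
        rw [integral_const_mul, integral_Ioi_exp_neg_mul_sq_add_div_sq (half_pos ha) hp]
    _ = exp (a / b * (1 - √(1 + 2 * b ^ 2 * l / a))) := by
        rw [two_mul_sqrt_half_mul_add ha hb, mul_sub, mul_one, sub_eq_add_neg, exp_add]
        linear_combination exp (a / b) * exp (-(a / b * √(1 + 2 * b ^ 2 * l / a))) * hconst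
end

section
/- Let a, b > 0 and let g be the inverse Gaussian density IG(a,b), with moments m_n = ∫₀^∞ tⁿ g(t) dt. Then m_0 = 1, m_1 = b, and for every integer n ≥ 1 the recursion m_{n+1} = ((2n−1) b² / a) · m_n + b² · m_{n−1} holds. -/
open MeasureTheory Real

/-- The `n`-th moment of the inverse Gaussian density `IG(a,b)`. -/
noncomputable def igMoment (a b : ℝ) (n : ℕ) : ℝ :=
  ∫ t in Set.Ioi (0 : ℝ), t ^ n * ig a b t

/-!
For `t > 0` the density is `√(a / 2π) e^{a/b} t^{-3/2} e^{-(p t + q / t)}` with `p = a / (2b²)` and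
`q = a / 2`, so `m_n` is a constant multiple of `J(n - 3/2)`, where
`J(s) = ∫₀^∞ t^s e^{-(p t + q / t)} dt`. Integrating the derivative of `t^s e^{-(p t + q / t)}`
over `(0, ∞)` gives `p J(s) = s J(s - 1) + q J(s - 2)`, which is the recursion. The substitution
`t ↦ (q / p) / t` gives `J(s) = (q / p)^{s + 1} J(-s - 2)`, hence `m₁ = b m₀`; the substitution
`u = √p √t - √q / √t`, for which `u² = p t + q / t - 2 √(p q)`, turns `J(-3/2)` into a Gaussian
integral, whence `m₀ = 1`.
-/

open Set Filter Topology
open scoped Nat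

-- The unnormalised density of the generalised inverse Gaussian law.
noncomputable def gigKernel (p q s t : ℝ) : ℝ := t ^ s * exp (-(p * t + q / t))

noncomputable def gigIntegral (p q s : ℝ) : ℝ := ∫ t in Ioi 0, gigKernel p q s t

lemma gigKernel_eq_mul_exp (p q s t : ℝ) :
    gigKernel p q s t = t ^ s * exp (-p * t) * exp (-(q / t)) := by
  rw [gigKernel, mul_assoc, ← exp_add]; ring_nf

lemma continuousOn_gigKernel (p q s : ℝ) : ContinuousOn (gigKernel p q s) (Ioi 0) := by
  intro t (ht : 0 < t)
  have ht₀ : t ≠ 0 := ht.ne'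
  exact ((continuousAt_id.rpow_const (Or.inl ht₀)).mul
    (by fun_prop (disch := assumption))).continuousWithinAt

lemma exp_neg_le_factorial_div_pow {x : ℝ} (hx : 0 < x) (k : ℕ) : exp (-x) ≤ k ! / x ^ k := by
  rw [exp_neg, inv_le_comm₀ (exp_pos x) (by positivity), inv_div]
  exact pow_div_factorial_le_exp _ hx.le k

lemma integrableOn_gigKernel {p q : ℝ} (hp : 0 < p) (hq : 0 < q) (s : ℝ) :
    IntegrableOn (gigKernel p q s) (Ioi 0) := by
  obtain ⟨k, hk⟩ : ∃ k : ℕ, -1 < s + k := ⟨⌈-s⌉₊ + 1, by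
    have := Nat.le_ceil (-s); push_cast; linarith⟩
  have hdom : IntegrableOn (fun t ↦ k ! / q ^ k * (t ^ (s + k) * exp (-p * t))) (Ioi 0) := by
    refine Integrable.const_mul ?_ _
    simpa [IntegrableOn] using integrableOn_rpow_mul_exp_neg_mul_rpow hk one_pos hp
  refine hdom.mono' ((continuousOn_gigKernel p q s).aestronglyMeasurable measurableSet_Ioi) ?_
  filter_upwards [ae_restrict_mem measurableSet_Ioi] with t (ht : 0 < t)
  rw [norm_of_nonneg (by unfold gigKernel; positivity), gigKernel_eq_mul_exp]
  calc t ^ s * exp (-p * t) * exp (-(q / t))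
      ≤ t ^ s * exp (-p * t) * (k ! / (q / t) ^ k) := by
        gcongr; exact exp_neg_le_factorial_div_pow (by positivity) k
    _ = k ! / q ^ k * (t ^ (s + k) * exp (-p * t)) := by
        rw [rpow_add ht, rpow_natCast, div_pow]; field_simp

lemma tendsto_gigKernel_atTop {p : ℝ} (hp : 0 < p) (q s : ℝ) :
    Tendsto (gigKernel p q s) atTop (𝓝 0) := by
  have hinv : Tendsto (fun t : ℝ ↦ exp (-(q / t))) atTop (𝓝 (exp (-(q * 0)))) := by
    simp only [div_eq_mul_inv]
    exact (continuous_exp.tendsto _).comp (tendsto_inv_atTop_zero.const_mul q).neg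
  simpa [funext (gigKernel_eq_mul_exp p q s)] using
    (tendsto_rpow_mul_exp_neg_mul_atTop_nhds_zero s p hp).mul hinv

lemma tendsto_gigKernel_nhdsGT_zero (p : ℝ) {q : ℝ} (hq : 0 < q) (s : ℝ) :
    Tendsto (gigKernel p q s) (𝓝[>] 0) (𝓝 0) := by
  have hlin : Tendsto (fun t : ℝ ↦ exp (-p * t)) (𝓝[>] 0) (𝓝 (exp (-p * 0))) :=
    ((continuous_exp.comp (continuous_const_mul (-p))).tendsto 0).mono_left nhdsWithin_le_nhds
  have hinv := (tendsto_rpow_mul_exp_neg_mul_atTop_nhds_zero (-s) q hq).comp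
    tendsto_inv_nhdsGT_zero
  have hprod := hlin.mul hinv
  rw [mul_zero] at hprod
  refine hprod.congr' ?_
  filter_upwards [self_mem_nhdsWithin] with t (ht : 0 < t)
  rw [gigKernel_eq_mul_exp, Function.comp_apply, inv_rpow ht.le, rpow_neg ht.le, inv_inv,
    div_eq_mul_inv, neg_mul q]
  ring

lemma hasDerivAt_gigKernel (p q s : ℝ) {t : ℝ} (ht : 0 < t) :
    HasDerivAt (gigKernel p q s)
      (s * gigKernel p q (s - 1) t - p * gigKernel p q s t + q * gigKernel p q (s - 2) t) t := by
  have hpow := hasDerivAt_rpow_const (p := s) (Or.inl ht.ne')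
  have hexp := (((hasDerivAt_id' t).const_mul p).fun_add
    ((hasDerivAt_inv ht.ne').const_mul q)).fun_neg.exp
  have hprod := hpow.fun_mul hexp
  simp only [← div_eq_mul_inv] at hprod
  refine hprod.congr_deriv ?_
  simp only [gigKernel, rpow_sub ht, rpow_two, rpow_one]
  field_simp
  ring

lemma gigIntegral_recurrence {p q : ℝ} (hp : 0 < p) (hq : 0 < q) {s : ℝ} (hs : s ≠ 0) :
    p * gigIntegral p q s = s * gigIntegral p q (s - 1) + q * gigIntegral p q (s - 2) := by
  have i₁ := (integrableOn_gigKernel hp hq (s - 1)).const_mul s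
  have i₂ := (integrableOn_gigKernel hp hq s).const_mul p
  have i₃ := (integrableOn_gigKernel hp hq (s - 2)).const_mul q
  have hzero : gigKernel p q s 0 = 0 := by rw [gigKernel, zero_rpow hs, zero_mul]
  have hcont : ContinuousWithinAt (gigKernel p q s) (Ici 0) 0 := by
    rw [← continuousWithinAt_Ioi_iff_Ici, ContinuousWithinAt, hzero]
    exact tendsto_gigKernel_nhdsGT_zero p hq s
  have hftc := integral_Ioi_of_hasDerivAt_of_tendsto hcont
    (fun t ht ↦ hasDerivAt_gigKernel p q s ht) ((i₁.sub i₂).add i₃)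
    (tendsto_gigKernel_atTop hp q s)
  rw [hzero, sub_zero, integral_add (f := fun t ↦ _ - _) (i₁.sub i₂) i₃, integral_sub i₁ i₂,
    integral_const_mul, integral_const_mul, integral_const_mul] at hftc
  simp only [gigIntegral]
  linarith

lemma gigIntegral_swap (p q s : ℝ) : gigIntegral p q s = gigIntegral q p (-s - 2) := by
  rw [gigIntegral, ← integral_comp_rpow_Ioi (gigKernel p q s) (p := -1) (by norm_num),
    gigIntegral]
  refine setIntegral_congr_fun measurableSet_Ioi fun t (ht : 0 < t) ↦ ?_
  simp only [gigKernel, smul_eq_mul, rpow_neg_one, inv_rpow ht.le, ← rpow_neg ht.le,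
    div_inv_eq_mul, abs_neg, abs_one, one_mul]
  rw [← mul_assoc, ← rpow_add ht, div_eq_mul_inv]
  ring_nf

lemma gigIntegral_eq_rpow_mul_gigIntegral_mul {c : ℝ} (hc : 0 < c) (p q s : ℝ) :
    gigIntegral p q s = c ^ (s + 1) * gigIntegral (c * p) (q / c) s := by
  have hsub := integral_comp_mul_left_Ioi (gigKernel p q s) 0 hc
  rw [mul_zero, smul_eq_mul] at hsub
  have hscaled : ∫ t in Ioi 0, gigKernel p q s (c * t) = c ^ s * gigIntegral (c * p) (q / c) s := by
    rw [gigIntegral, ← integral_const_mul]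
    refine setIntegral_congr_fun measurableSet_Ioi fun t (ht : 0 < t) ↦ ?_
    simp only [gigKernel, mul_rpow hc.le ht.le]
    field_simp
  rw [← gigIntegral] at hsub
  rw [rpow_add_one hc.ne', (inv_mul_eq_iff_eq_mul₀ hc.ne').1 (hsub.symm.trans hscaled)]
  ring

lemma gigIntegral_reflect {p q : ℝ} (hp : 0 < p) (hq : 0 < q) (s : ℝ) :
    gigIntegral p q s = (q / p) ^ (s + 1) * gigIntegral p q (-s - 2) := by
  rw [gigIntegral_swap, gigIntegral_eq_rpow_mul_gigIntegral_mul (div_pos hp hq),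
    div_mul_cancel₀ p hq.ne', div_div_cancel₀ hp.ne', show -s - 2 + 1 = -(s + 1) by ring,
    rpow_neg (div_pos hp hq).le, ← inv_rpow (div_pos hp hq).le, inv_div]

noncomputable def gaussSubst (p q t : ℝ) : ℝ := √p * √t - √q / √t

lemma sq_gaussSubst {p q t : ℝ} (hp : 0 ≤ p) (hq : 0 ≤ q) (ht : 0 < t) :
    gaussSubst p q t ^ 2 = p * t + q / t - 2 * √(p * q) := by
  have hst : 0 < √t := sqrt_pos.2 ht
  calc gaussSubst p q t ^ 2 = √p ^ 2 * √t ^ 2 + √q ^ 2 / √t ^ 2 - 2 * (√p * √q) := by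
        rw [gaussSubst]; field_simp; ring
    _ = p * t + q / t - 2 * √(p * q) := by rw [sq_sqrt hp, sq_sqrt hq, sq_sqrt ht.le, sqrt_mul hp]

lemma hasDerivAt_gaussSubst (p q : ℝ) {t : ℝ} (ht : 0 < t) :
    HasDerivAt (gaussSubst p q) ((√p * (√t)⁻¹ + √q * (√t ^ 3)⁻¹) / 2) t := by
  have hst : 0 < √t := sqrt_pos.2 ht
  have hsqrt := hasDerivAt_sqrt ht.ne'
  have hφ : gaussSubst p q = fun t ↦ √p * √t - √q * (√t)⁻¹ := by
    ext; rw [gaussSubst, div_eq_mul_inv]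
  rw [hφ]
  refine ((hsqrt.const_mul √p).fun_sub ((hsqrt.inv hst.ne').const_mul √q)).congr_deriv ?_
  field_simp
  ring

lemma strictMonoOn_gaussSubst {p : ℝ} (hp : 0 < p) (q : ℝ) :
    StrictMonoOn (gaussSubst p q) (Ioi 0) := by
  intro x (hx : 0 < x) y (hy : 0 < y) hxy
  have hsx : 0 < √x := sqrt_pos.2 hx
  have hsxy : √x < √y := sqrt_lt_sqrt hx.le hxy
  have h₁ : √p * √x < √p * √y := by gcongr
  have h₂ : √q / √y ≤ √q / √x := by gcongr
  rw [gaussSubst, gaussSubst]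
  linarith

lemma image_gaussSubst {p q : ℝ} (hp : 0 < p) (hq : 0 < q) : gaussSubst p q '' Ioi 0 = univ := by
  refine eq_univ_of_forall fun u ↦ ?_
  have hsp : 0 < √p := sqrt_pos.2 hp
  have hsq : 0 < √q := sqrt_pos.2 hq
  set D := √(u ^ 2 + 4 * √p * √q)
  have hD : D ^ 2 = u ^ 2 + 4 * √p * √q := sq_sqrt (by positivity)
  have huD : |u| < D := by
    rw [← sqrt_sq_eq_abs]
    exact sqrt_lt_sqrt (sq_nonneg u) (by nlinarith)
  set x := (u + D) / (2 * √p) with hx_def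
  have hx : 0 < x := div_pos (by linarith [neg_abs_le u]) (by positivity)
  have hroot : √p * x ^ 2 - u * x - √q = 0 := by
    rw [hx_def]
    field_simp
    linear_combination hD
  refine ⟨x ^ 2, mem_Ioi.2 (by positivity), ?_⟩
  rw [gaussSubst, sqrt_sq hx.le]
  field_simp
  linear_combination hroot

lemma gigIntegral_neg_three_halves {p q : ℝ} (hp : 0 < p) (hq : 0 < q) :
    gigIntegral p q (-3 / 2) = √(π / q) * exp (-(2 * √(p * q))) := by
  have hsubst := integral_image_eq_integral_abs_deriv_smul measurableSet_Ioi
    (fun t (ht : 0 < t) ↦ (hasDerivAt_gaussSubst p q ht).hasDerivWithinAt)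
    (strictMonoOn_gaussSubst hp q).injOn (fun u ↦ exp (-1 * u ^ 2))
  rw [image_gaussSubst hp hq, setIntegral_univ, integral_gaussian, div_one] at hsubst
  have hintegrand : ∀ t ∈ Ioi (0 : ℝ),
      |(√p * (√t)⁻¹ + √q * (√t ^ 3)⁻¹) / 2| • exp (-1 * gaussSubst p q t ^ 2) =
        exp (2 * √(p * q)) * (√p / 2 * gigKernel p q (-1 / 2) t
          + √q / 2 * gigKernel p q (-3 / 2) t) := by
    intro t (ht : 0 < t)
    rw [abs_of_pos (by positivity), sq_gaussSubst hp.le hq.le ht, gigKernel, gigKernel,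
      rpow_div_two_eq_sqrt _ ht.le, rpow_div_two_eq_sqrt _ ht.le, rpow_neg (sqrt_nonneg t),
      rpow_neg (sqrt_nonneg t), rpow_one, show (3 : ℝ) = (3 : ℕ) by norm_num, rpow_natCast,
      smul_eq_mul, show -1 * (p * t + q / t - 2 * √(p * q)) = 2 * √(p * q) + -(p * t + q / t)
        by ring, exp_add]
    ring
  rw [setIntegral_congr_fun measurableSet_Ioi hintegrand, integral_const_mul,
    integral_add ((integrableOn_gigKernel hp hq _).const_mul _)
      ((integrableOn_gigKernel hp hq _).const_mul _),
    integral_const_mul, integral_const_mul, ← gigIntegral, ← gigIntegral,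
    gigIntegral_reflect hp hq (-1 / 2), show -(-1 / 2 : ℝ) - 2 = -3 / 2 by norm_num,
    show (-1 / 2 : ℝ) + 1 = 1 / 2 by norm_num, ← sqrt_eq_rpow, sqrt_div' _ hp.le] at hsubst
  have hsp : 0 < √p := sqrt_pos.2 hp
  rw [sqrt_div' _ hq.le, hsubst, exp_neg]
  field_simp
  ring

lemma ig_eq_gigKernel (a : ℝ) {b t : ℝ} (hb : b ≠ 0) (ht : 0 < t) :
    ig a b t = √(a / (2 * π)) * exp (a / b) * gigKernel (a / (2 * b ^ 2)) (a / 2) (-3 / 2) t := by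
  have hexponent :
      -(a * (t - b) ^ 2) / (2 * b ^ 2 * t) = a / b + -(a / (2 * b ^ 2) * t + a / 2 / t) := by
    field_simp
    ring
  have hsqrt_cube : √(t ^ 3) = √t ^ 3 := by
    rw [← sqrt_sq (by positivity : 0 ≤ √t ^ 3), ← pow_mul, mul_comm, pow_mul, sq_sqrt ht.le]
  rw [ig, gigKernel, hexponent, exp_add, ← div_div, sqrt_div' _ (by positivity), hsqrt_cube,
    rpow_div_two_eq_sqrt _ ht.le, rpow_neg (sqrt_nonneg t), show (3 : ℝ) = (3 : ℕ) by norm_num,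
    rpow_natCast]
  ring

lemma igMoment_eq_gigIntegral (a : ℝ) {b : ℝ} (hb : b ≠ 0) (n : ℕ) :
    igMoment a b n =
      √(a / (2 * π)) * exp (a / b) * gigIntegral (a / (2 * b ^ 2)) (a / 2) (n - 3 / 2) := by
  rw [igMoment, gigIntegral, ← integral_const_mul]
  refine setIntegral_congr_fun measurableSet_Ioi fun t (ht : 0 < t) ↦ ?_
  rw [ig_eq_gigKernel a hb ht, gigKernel, gigKernel, show (n : ℝ) - 3 / 2 = n + -3 / 2 by ring,
    rpow_add ht, rpow_natCast]
  ring

lemma igMoment_zero {a b : ℝ} (ha : 0 < a) (hb : 0 < b) : igMoment a b 0 = 1 := by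
  have hpq : √(a / (2 * b ^ 2) * (a / 2)) = a / (2 * b) := by
    rw [show a / (2 * b ^ 2) * (a / 2) = (a / (2 * b)) ^ 2 by ring, sqrt_sq (by positivity)]
  have hnorm : √(a / (2 * π)) * √(π / (a / 2)) = 1 := by
    rw [← sqrt_mul (by positivity), show a / (2 * π) * (π / (a / 2)) = 1 by field_simp, sqrt_one]
  rw [igMoment_eq_gigIntegral a hb.ne', Nat.cast_zero, zero_sub, ← neg_div,
    gigIntegral_neg_three_halves (by positivity) (by positivity), hpq,
    show 2 * (a / (2 * b)) = a / b by field_simp, exp_neg, ← mul_assoc, mul_right_comm _ (exp _),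
    hnorm]
  field_simp

lemma igMoment_one {a b : ℝ} (ha : 0 < a) (hb : 0 < b) : igMoment a b 1 = b * igMoment a b 0 := by
  rw [igMoment_eq_gigIntegral a hb.ne', igMoment_eq_gigIntegral a hb.ne',
    gigIntegral_reflect (by positivity) (by positivity),
    show a / 2 / (a / (2 * b ^ 2)) = b ^ 2 by field_simp,
    show ((1 : ℕ) : ℝ) - 3 / 2 + 1 = 1 / 2 by norm_num, ← sqrt_eq_rpow, sqrt_sq hb.le,
    show -((1 : ℕ) - 3 / 2 : ℝ) - 2 = (0 : ℕ) - 3 / 2 by norm_num]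
  ring

lemma igMoment_add_one {a b : ℝ} (ha : 0 < a) (hb : 0 < b) {n : ℕ} (hn : 1 ≤ n) :
    igMoment a b (n + 1) =
      (2 * (n : ℝ) - 1) * b ^ 2 / a * igMoment a b n + b ^ 2 * igMoment a b (n - 1) := by
  have hs : (n : ℝ) - 1 / 2 ≠ 0 := by
    have : (1 : ℝ) ≤ n := by exact_mod_cast hn
    linarith
  have hrec := gigIntegral_recurrence (p := a / (2 * b ^ 2)) (q := a / 2) (by positivity)
    (by positivity) hs
  rw [igMoment_eq_gigIntegral a hb.ne', igMoment_eq_gigIntegral a hb.ne',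
    igMoment_eq_gigIntegral a hb.ne', Nat.cast_sub hn, Nat.cast_add_one, Nat.cast_one,
    show (n : ℝ) + 1 - 3 / 2 = n - 1 / 2 by ring, show (n : ℝ) - 3 / 2 = n - 1 / 2 - 1 by ring,
    show (n : ℝ) - 1 - 3 / 2 = n - 1 / 2 - 2 by ring]
  field_simp at hrec ⊢
  linear_combination hrec

theorem ig_moment_recursion (a b : ℝ) (ha : 0 < a) (hb : 0 < b) :
    igMoment a b 0 = 1 ∧ igMoment a b 1 = b ∧
      ∀ n : ℕ, 1 ≤ n →
        igMoment a b (n + 1) =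
          (2 * (n : ℝ) - 1) * b ^ 2 / a * igMoment a b n + b ^ 2 * igMoment a b (n - 1) := by
  refine ⟨igMoment_zero ha hb, ?_, fun n hn ↦ igMoment_add_one ha hb hn⟩
  rw [igMoment_one ha hb, igMoment_zero ha hb, mul_one]
end

section
/- Let a, b > 0, α > −1, β > 0. Let g be the inverse Gaussian density IG(a,b) and f_{α,β} the Gamma density. Then the function t ↦ g(t)²/f_{α,β}(t) is integrable on (0, ∞) if and only if β ≤ a/b²; moreover ∫₀^∞ g(t)²/f_{α,β}(t) dt = (a Γ(α+1) e^{2a/b} / (2π β^{α+1})) · ∫₀^∞ t^{−(α+3)} exp(−At − a/t) dt, where A = a/b² − β. -/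
open MeasureTheory Real

/-- The Gamma density `f_{α,β}(t) = β (βt)^α e^{-βt} / Γ(α+1)`. -/
noncomputable def gammaPdf (α β t : ℝ) : ℝ :=
  β * (β * t) ^ α * Real.exp (-β * t) / Real.Gamma (α + 1)

/-! Expanding the square in the exponent, `g(t)² / f_{α,β}(t) = C · t^{-(α+3)} e^{-At - a/t}` with
`A = a/b² - β` and an explicit constant `C > 0`. Near `0` the factor `e^{-a/t}` beats every power
of `t`, so integrability is decided at infinity: for `A ≥ 0` the integrand is dominated by the
integrable power `t^{-(α+3)}`, while for `A < 0` it grows exponentially. -/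

open Set Filter
open scoped Nat

lemma ig_sq_div_gammaPdf {a b α β t : ℝ} (ha : 0 ≤ a) (hb : b ≠ 0) (hβ : 0 < β)
    (hΓ : Gamma (α + 1) ≠ 0) (ht : 0 < t) :
    ig a b t ^ 2 / gammaPdf α β t =
      a * Gamma (α + 1) * exp (2 * a / b) / (2 * π * β ^ (α + 1)) *
        (t ^ (-(α + 3)) * exp (-(a / b ^ 2 - β) * t - a / t)) := by
  have h_ig : ig a b t ^ 2 =
      a / (2 * π * t ^ 3) * exp (2 * a / b + (-(a / b ^ 2 - β) * t - a / t) + -β * t) := by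
    rw [ig, mul_pow, sq_sqrt (by positivity), ← exp_nat_mul]
    congr 2
    field_simp
    ring
  have h_gamma : gammaPdf α β t = β ^ (α + 1) * t ^ α * exp (-β * t) / Gamma (α + 1) := by
    rw [gammaPdf, mul_rpow hβ.le ht.le, rpow_add_one hβ.ne']
    ring
  have h_pow : t ^ (-(α + 3)) = (t ^ α * t ^ 3)⁻¹ := by
    rw [← rpow_natCast t 3, ← rpow_add ht, ← rpow_neg ht.le]
    norm_num
  have htα := (rpow_pos_of_pos ht α).ne'
  have hβα := (rpow_pos_of_pos hβ (α + 1)).ne'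
  rw [h_ig, exp_add, exp_add, h_gamma, h_pow]
  field_simp

lemma rpow_mul_exp_neg_div_le {s a t : ℝ} (n : ℕ) (hn : -(n : ℝ) ≤ s) (ha : 0 < a)
    (ht : 0 < t) (ht1 : t ≤ 1) :
    t ^ s * exp (-(a / t)) ≤ n ! / a ^ n := by
  have h_exp : a ^ n ≤ n ! * (t ^ n * exp (a / t)) := by
    have := pow_div_factorial_le_exp (x := a / t) (div_pos ha ht).le n
    rw [div_pow, div_div, div_le_iff₀ (by positivity)] at this
    linarith
  calc t ^ s * exp (-(a / t)) ≤ t ^ (-(n : ℝ)) * exp (-(a / t)) :=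
        mul_le_mul_of_nonneg_right (rpow_le_rpow_of_exponent_ge ht ht1 hn) (exp_pos _).le
    _ = 1 / (t ^ n * exp (a / t)) := by
        rw [rpow_neg ht.le, rpow_natCast, exp_neg]
        ring
    _ ≤ n ! / a ^ n := by
        rw [div_le_div_iff₀ (by positivity) (by positivity)]
        linarith

section

variable {s A a : ℝ}

lemma measurable_rpow_mul_exp : Measurable fun t : ℝ => t ^ s * exp (-A * t - a / t) := by
  fun_prop

lemma integrableOn_Ioc_rpow_mul_exp (hA : 0 ≤ A) (ha : 0 < a) :
    IntegrableOn (fun t : ℝ => t ^ s * exp (-A * t - a / t)) (Ioc 0 1) := by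
  obtain ⟨n, hn⟩ := exists_nat_ge (-s)
  refine Integrable.mono (integrableOn_const (C := (n ! : ℝ) / a ^ n) measure_Ioc_lt_top.ne)
    measurable_rpow_mul_exp.aestronglyMeasurable ?_
  rw [ae_restrict_iff' measurableSet_Ioc]
  refine .of_forall fun t ⟨ht, ht1⟩ => ?_
  rw [norm_of_nonneg (by positivity), norm_of_nonneg (by positivity)]
  calc t ^ s * exp (-A * t - a / t) ≤ t ^ s * exp (-(a / t)) := by
        gcongr
        nlinarith
    _ ≤ n ! / a ^ n := rpow_mul_exp_neg_div_le n (by linarith) ha ht ht1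

lemma integrableOn_Ioi_one_rpow_mul_exp (hA : 0 ≤ A) (ha : 0 ≤ a) (hs : s < -1) :
    IntegrableOn (fun t : ℝ => t ^ s * exp (-A * t - a / t)) (Ioi 1) := by
  refine Integrable.mono (integrableOn_Ioi_rpow_of_lt hs one_pos)
    measurable_rpow_mul_exp.aestronglyMeasurable ?_
  rw [ae_restrict_iff' measurableSet_Ioi]
  refine .of_forall fun t (ht : 1 < t) => ?_
  have ht0 : 0 < t := one_pos.trans ht
  rw [norm_of_nonneg (by positivity), norm_of_nonneg (by positivity)]
  calc t ^ s * exp (-A * t - a / t) ≤ t ^ s * 1 := by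
        gcongr
        rw [exp_le_one_iff]
        nlinarith [div_nonneg ha ht0.le]
    _ = t ^ s := mul_one _

lemma not_integrableOn_Ioi_of_const_le {f : ℝ → ℝ} {c T : ℝ} (hc : 0 < c)
    (hf : ∀ t > T, c ≤ f t) : ¬ IntegrableOn f (Ioi T) := by
  intro h
  have h_const : IntegrableOn (fun _ => c) (Ioi T) := by
    refine Integrable.mono h aestronglyMeasurable_const ((ae_restrict_iff' measurableSet_Ioi).2 ?_)
    refine .of_forall fun t ht => ?_
    rw [norm_of_nonneg hc.le, norm_of_nonneg (hc.le.trans (hf t ht))]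
    exact hf t ht
  simp [integrableOn_const_iff, hc.ne'] at h_const

lemma not_integrableOn_Ioi_rpow_mul_exp (hA : A < 0) (ha : 0 ≤ a) :
    ¬ IntegrableOn (fun t : ℝ => t ^ s * exp (-A * t - a / t)) (Ioi 0) := by
  -- `t ^ s * exp (-A * t)` tends to infinity, while `exp (-a / t) ≥ exp (-a)` for `t ≥ 1`
  obtain ⟨T, hT⟩ := eventually_atTop.1
    ((tendsto_exp_mul_div_rpow_atTop (-s) (-A) (by linarith)).eventually_ge_atTop 1)
  intro h
  refine not_integrableOn_Ioi_of_const_le (exp_pos (-a)) (T := max T 1) (fun t ht => ?_)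
    (h.mono_set (Ioi_subset_Ioi (by positivity)))
  have hT1 : 1 ≤ t := (le_max_right T 1).trans ht.le
  have ht0 : 0 < t := one_pos.trans_le hT1
  have h_big := hT t ((le_max_left T 1).trans ht.le)
  rw [rpow_neg ht0.le, div_inv_eq_mul] at h_big
  calc exp (-a) ≤ exp (-A * t) * t ^ s * exp (-a) := by nlinarith [exp_pos (-a)]
    _ ≤ exp (-A * t) * t ^ s * exp (-(a / t)) := by
        gcongr
        exact div_le_self ha hT1
    _ = t ^ s * exp (-A * t - a / t) := by
        rw [sub_eq_add_neg, exp_add]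
        ring

theorem integrableOn_Ioi_rpow_mul_exp_iff (ha : 0 < a) (hs : s < -1) :
    IntegrableOn (fun t : ℝ => t ^ s * exp (-A * t - a / t)) (Ioi 0) ↔ 0 ≤ A := by
  refine ⟨fun h => not_lt.1 fun hA => not_integrableOn_Ioi_rpow_mul_exp hA ha.le h,
    fun hA => ?_⟩
  rw [← Ioc_union_Ioi_eq_Ioi zero_le_one]
  exact (integrableOn_Ioc_rpow_mul_exp hA ha).union
    (integrableOn_Ioi_one_rpow_mul_exp hA ha.le hs)

end

theorem ig_sq_div_gamma_integrable_iff (a b α β : ℝ) (ha : 0 < a) (hb : 0 < b)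
    (hα : -1 < α) (hβ : 0 < β) :
    (IntegrableOn (fun t : ℝ => (ig a b t) ^ 2 / gammaPdf α β t) (Set.Ioi 0) ↔
      β ≤ a / b ^ 2) ∧
    (∫ t in Set.Ioi (0 : ℝ), (ig a b t) ^ 2 / gammaPdf α β t) =
      a * Real.Gamma (α + 1) * Real.exp (2 * a / b) / (2 * Real.pi * β ^ (α + 1)) *
        ∫ t in Set.Ioi (0 : ℝ), t ^ (-(α + 3)) * Real.exp (-(a / b ^ 2 - β) * t - a / t) := by
  have hΓ : 0 < Gamma (α + 1) := Gamma_pos_of_pos (by linarith)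
  have h_eq : EqOn (fun t => ig a b t ^ 2 / gammaPdf α β t)
      (fun t => a * Gamma (α + 1) * exp (2 * a / b) / (2 * π * β ^ (α + 1)) *
        (t ^ (-(α + 3)) * exp (-(a / b ^ 2 - β) * t - a / t))) (Ioi 0) :=
    fun t ht => ig_sq_div_gammaPdf ha.le hb.ne' hβ hΓ.ne' ht
  have h_unit : IsUnit (a * Gamma (α + 1) * exp (2 * a / b) / (2 * π * β ^ (α + 1))) :=
    (by have := rpow_pos_of_pos hβ (α + 1); positivity : (0 : ℝ) < _).ne'.isUnit
  refine ⟨?_, setIntegral_congr_fun measurableSet_Ioi h_eq |>.trans (integral_const_mul _ _)⟩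
  rw [integrableOn_congr_fun h_eq measurableSet_Ioi, IntegrableOn, integrable_const_mul_iff h_unit,
    ← IntegrableOn, integrableOn_Ioi_rpow_mul_exp_iff ha (by linarith), sub_nonneg]
end

section
/- Let a, b > 0, α > −1, β > 0. Set ã = a/2, Ã = a/(2b²) − β, D = sqrt(ã/π) · e^{a/b} · Γ(α+1)/β^{α+1}, and define polynomials q_m (m ≥ 0) by q_0(t) = 1 and q_m(t) = q_{m−1}(t) · (2Ã t² + (4m−1+2α) t − 2ã) − 2t² q_{m−1}'(t). Let F(t) = g(t)/f_{α,β}(t) for t > 0, where g is the inverse Gaussian density IG(a,b) and f_{α,β} the Gamma density. Then for every m ≥ 0 and every t > 0, the m-th derivative of F satisfies F^{(m)}(t) = ((−1)^m / 2^m) · D · exp(−Ã t − ã/t) · t^{−2m − 3/2 − α} · q_m(t). -/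
open MeasureTheory Real Polynomial

/-- The polynomials `q_m` defined by `q_0 = 1` and
`q_m(t) = q_{m-1}(t)(2Ã t² + (4m-1+2α)t - 2ã) - 2t² q_{m-1}'(t)`. -/
noncomputable def qpoly (Atil atil α : ℝ) : ℕ → Polynomial ℝ
  | 0 => 1
  | m + 1 =>
      qpoly Atil atil α m *
          (Polynomial.C (2 * Atil) * Polynomial.X ^ 2 +
            Polynomial.C (4 * ((m : ℝ) + 1) - 1 + 2 * α) * Polynomial.X -
            Polynomial.C (2 * atil)) -
        Polynomial.C 2 * Polynomial.X ^ 2 * Polynomial.derivative (qpoly Atil atil α m)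

/-! Both densities are of the form `exp (-A t - c / t) * t ^ p` up to constants, and so is
every derivative of their ratio up to a polynomial factor; differentiating
`exp (-A t - c / t) * t ^ p * q t` gives `t ^ (p - 2)` times a new polynomial factor, which is
the recursion defining `qpoly`. -/

open Set

lemma ig_eq {b t : ℝ} (a : ℝ) (hb : b ≠ 0) (ht : 0 < t) :
    ig a b t = √(a / 2 / π) * exp (a / b) *
      exp (-(a / (2 * b ^ 2)) * t - a / 2 / t) * t ^ (-(3 / 2 : ℝ)) := by
  have hsqrt : √(a / (2 * π * t ^ 3)) = √(a / 2 / π) * t ^ (-(3 / 2 : ℝ)) := by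
    rw [show a / (2 * π * t ^ 3) = a / 2 / π * (t ^ 3)⁻¹ by field_simp,
      sqrt_mul' _ (by positivity), sqrt_inv]
    congr 1
    rw [← rpow_natCast, sqrt_eq_rpow, ← rpow_mul ht.le, ← rpow_neg ht.le]
    norm_num
  have hexp : -(a * (t - b) ^ 2) / (2 * b ^ 2 * t) =
      a / b + (-(a / (2 * b ^ 2)) * t - a / 2 / t) := by
    field_simp
    ring
  rw [ig, hsqrt, hexp, exp_add]
  ring

lemma gammaPdf_eq {β t : ℝ} (α : ℝ) (hβ : 0 < β) (ht : 0 ≤ t) :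
    gammaPdf α β t = β ^ (α + 1) / Gamma (α + 1) * t ^ α * exp (-β * t) := by
  rw [gammaPdf, mul_rpow hβ.le ht, rpow_add_one hβ.ne']
  ring

lemma ig_div_gammaPdf {a b α β t : ℝ} (hb : b ≠ 0) (hα : -1 < α) (hβ : 0 < β)
    (ht : 0 < t) :
    ig a b t / gammaPdf α β t =
      √(a / 2 / π) * exp (a / b) * Gamma (α + 1) / β ^ (α + 1) *
        exp (-(a / (2 * b ^ 2) - β) * t - a / 2 / t) * t ^ (-(3 / 2 : ℝ) - α) := by
  have hΓ : 0 < Gamma (α + 1) := Gamma_pos_of_pos (by linarith)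
  have hexp : exp (-(a / (2 * b ^ 2) - β) * t - a / 2 / t) =
      exp (-(a / (2 * b ^ 2)) * t - a / 2 / t) * (exp (-β * t))⁻¹ := by
    rw [← exp_neg, ← exp_add]
    ring_nf
  rw [ig_eq a hb ht, gammaPdf_eq α hβ ht.le, hexp, rpow_sub ht]
  have hβpow := rpow_pos_of_pos hβ (α + 1)
  have htpow := rpow_pos_of_pos ht α
  field_simp

lemma hasDerivAt_exp_mul_rpow_mul_eval (A c p : ℝ) (q : ℝ[X]) {t : ℝ} (ht : 0 < t) :
    HasDerivAt (fun s => exp (-A * s - c / s) * s ^ p * q.eval s)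
      (exp (-A * t - c / t) * t ^ (p - 2) *
        ((-A * t ^ 2 + c + p * t) * q.eval t + t ^ 2 * q.derivative.eval t)) t := by
  have hlin : HasDerivAt (fun s => -A * s - c / s) (-A + c / t ^ 2) t := by
    have hinv := (hasDerivAt_inv ht.ne').const_mul c
    simp only [← div_eq_mul_inv] at hinv
    exact (((hasDerivAt_id t).const_mul (-A)).sub hinv).congr_deriv (by ring_nf)
  have hpow : HasDerivAt (fun s => s ^ p) (p * t ^ (p - 1)) t :=
    hasDerivAt_rpow_const (Or.inl ht.ne')
  refine ((hlin.exp.mul hpow).mul (q.hasDerivAt t)).congr_deriv ?_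
  simp only [Pi.mul_apply]
  rw [rpow_sub_one ht.ne', rpow_sub ht, rpow_two]
  field_simp

lemma qpoly_succ_eval (A c α : ℝ) (m : ℕ) (t : ℝ) :
    (qpoly A c α (m + 1)).eval t =
      -2 * ((-A * t ^ 2 + c + (-(2 * (m : ℝ)) - 3 / 2 - α) * t) * (qpoly A c α m).eval t +
        t ^ 2 * (qpoly A c α m).derivative.eval t) := by
  simp only [qpoly, eval_sub, eval_mul, eval_add, eval_pow, eval_C, eval_X]
  ring

lemma eqOn_iteratedDeriv_qpoly {f : ℝ → ℝ} {A c α D : ℝ}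
    (hf : EqOn f (fun s => D * exp (-A * s - c / s) * s ^ (-(3 / 2 : ℝ) - α)) (Ioi 0))
    (m : ℕ) :
    EqOn (iteratedDeriv m f) (fun s => (-1) ^ m / 2 ^ m * D * exp (-A * s - c / s) *
      s ^ (-(2 * (m : ℝ)) - 3 / 2 - α) * (qpoly A c α m).eval s) (Ioi 0) := by
  induction m with
  | zero =>
    intro t ht
    simp [hf ht, qpoly]
  | succ m ih =>
    intro t ht
    have hderiv := ((hasDerivAt_exp_mul_rpow_mul_eval A c (-(2 * (m : ℝ)) - 3 / 2 - α)
      (qpoly A c α m) ht).const_mul ((-1) ^ m / 2 ^ m * D)).deriv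
    simp only [← mul_assoc] at hderiv
    rw [iteratedDeriv_succ, ih.deriv isOpen_Ioi ht, hderiv]
    beta_reduce
    have hexponent :
        -(2 * ((m + 1 : ℕ) : ℝ)) - 3 / 2 - α = -(2 * (m : ℝ)) - 3 / 2 - α - 2 := by
      push_cast
      ring
    rw [qpoly_succ_eval, hexponent]
    ring

theorem iteratedDeriv_ig_div_gamma_general (a b α β : ℝ) (hb : 0 < b)
    (hα : -1 < α) (hβ : 0 < β) (m : ℕ) (t : ℝ) (ht : 0 < t) :
    iteratedDeriv m (fun s : ℝ => ig a b s / gammaPdf α β s) t =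
      (-1 : ℝ) ^ m / 2 ^ m *
        (Real.sqrt (a / 2 / Real.pi) * Real.exp (a / b) * Real.Gamma (α + 1) / β ^ (α + 1)) *
        Real.exp (-(a / (2 * b ^ 2) - β) * t - (a / 2) / t) *
        t ^ (-(2 * (m : ℝ)) - 3 / 2 - α) *
        (qpoly (a / (2 * b ^ 2) - β) (a / 2) α m).eval t :=
  eqOn_iteratedDeriv_qpoly (fun _ hs => ig_div_gammaPdf hb.ne' hα hβ hs) m ht

theorem iteratedDeriv_ig_div_gamma (a b α β : ℝ) (ha : 0 < a) (hb : 0 < b)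
    (hα : -1 < α) (hβ : 0 < β) (m : ℕ) (t : ℝ) (ht : 0 < t) :
    iteratedDeriv m (fun s : ℝ => ig a b s / gammaPdf α β s) t =
      (-1 : ℝ) ^ m / 2 ^ m *
        (Real.sqrt (a / 2 / Real.pi) * Real.exp (a / b) * Real.Gamma (α + 1) / β ^ (α + 1)) *
        Real.exp (-(a / (2 * b ^ 2) - β) * t - (a / 2) / t) *
        t ^ (-(2 * (m : ℝ)) - 3 / 2 - α) *
        (qpoly (a / (2 * b ^ 2) - β) (a / 2) α m).eval t :=
  iteratedDeriv_ig_div_gamma_general a b α β hb hα hβ m t ht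
end

section
/- Let a, b > 0, α > −1, β > 0 with β < a/b², and let F(t) = g(t)/f_{α,β}(t) for t > 0, where g is the inverse Gaussian density IG(a,b) and f_{α,β} the Gamma density. Then for every integer m ≥ 0, the function t ↦ t^m · (F^{(m)}(t))² · f_{α,β}(t) is integrable on (0, ∞), where F^{(m)} denotes the m-th derivative of F. -/
/-!
On `(0, ∞)` the ratio `F = g / f_{α,β}` has the shape `K t^γ e^(c t + d / t)` with
`γ = -(α + 3/2)`, `c = β - a / (2b²)`, `d = -a/2`, and differentiating this shape only multiplies
it by `t⁻²` and a polynomial: `F⁽ᵐ⁾(t) = K t^(γ - 2m) e^(c t + d / t) Pₘ(t)`. So the integrand is a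
polynomial times `K' t^γ' e^((2c - β) t - a / t)`, where `2c - β = β - a / b² < 0`. Such a function
is integrable on `(0, ∞)`: at infinity the exponential decays, and near `0` the bound
`e^(-a/t) ≤ n! a⁻ⁿ tⁿ` turns any power `t^γ'` into an integrable one.
-/

open MeasureTheory Real

open Set Polynomial Nat

noncomputable def powExpKernel (K γ c d t : ℝ) : ℝ := K * t ^ γ * exp (c * t + d / t)

section Algebra

variable {K K' γ γ' c c' d d' t : ℝ}

lemma powExpKernel_mul (ht : 0 < t) :
    powExpKernel K γ c d t * powExpKernel K' γ' c' d' t =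
      powExpKernel (K * K') (γ + γ') (c + c') (d + d') t := by
  simp only [powExpKernel, rpow_add ht, add_mul, add_div, exp_add]
  ring

lemma powExpKernel_inv (ht : 0 ≤ t) :
    (powExpKernel K γ c d t)⁻¹ = powExpKernel K⁻¹ (-γ) (-c) (-d) t := by
  simp only [powExpKernel, rpow_neg ht, neg_mul, neg_div, ← neg_add, exp_neg, mul_inv]

lemma powExpKernel_add_natCast (n : ℕ) (ht : 0 < t) :
    powExpKernel K (γ + n) c d t = t ^ n * powExpKernel K γ c d t := by
  simp only [powExpKernel, rpow_add ht, rpow_natCast]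
  ring

lemma gammaPdf_eq_powExpKernel {α β : ℝ} (hβ : 0 < β) (ht : 0 < t) :
    gammaPdf α β t = powExpKernel (β ^ (α + 1) / Gamma (α + 1)) α (-β) 0 t := by
  simp only [gammaPdf, powExpKernel, mul_rpow hβ.le ht.le, rpow_add hβ, rpow_one, zero_div,
    add_zero]
  ring

lemma ig_eq_powExpKernel {a b : ℝ} (hb : b ≠ 0) (ht : 0 < t) :
    ig a b t = powExpKernel (√(a / (2 * π)) * exp (a / b)) (-(3 / 2)) (-(a / (2 * b ^ 2)))
      (-(a / 2)) t := by
  have hsqrt : √(a / (2 * π * t ^ 3)) = √(a / (2 * π)) * t ^ (-(3 / 2) : ℝ) := by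
    rw [div_mul_eq_div_div, sqrt_div' _ (by positivity), rpow_neg ht.le, div_eq_mul_inv,
      sqrt_eq_rpow (t ^ 3), ← rpow_natCast, ← rpow_mul ht.le]
    norm_num
  have hexp : -(a * (t - b) ^ 2) / (2 * b ^ 2 * t) =
      a / b + (-(a / (2 * b ^ 2)) * t + -(a / 2) / t) := by
    field_simp
    ring
  rw [ig, powExpKernel, hsqrt, hexp, exp_add]
  ring

end Algebra

section Derivatives

variable {K γ c d t : ℝ}

lemma hasDerivAt_powExpKernel (ht : 0 < t) :
    HasDerivAt (powExpKernel K γ c d)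
      (powExpKernel K (γ - 2) c d t * (c * t ^ 2 + γ * t - d)) t := by
  have hpow : HasDerivAt (fun s => s ^ γ) (γ * t ^ (γ - 1)) t :=
    hasDerivAt_rpow_const (Or.inl ht.ne')
  have hexp : HasDerivAt (fun s => c * s + d / s) (c - d / t ^ 2) t := by
    refine (((hasDerivAt_id' t).const_mul c).add
      ((hasDerivAt_inv ht.ne').const_mul d)).congr_deriv ?_
    ring
  refine ((hpow.const_mul K).mul hexp.exp).congr_deriv ?_
  have h1 : t ^ (γ - 1) = t ^ (γ - 2) * t := by
    rw [← rpow_add_one ht.ne']; ring_nf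
  have h2 : t ^ γ = t ^ (γ - 2) * t ^ 2 := by
    rw [← rpow_natCast, ← rpow_add ht]; norm_num
  rw [powExpKernel, h1, h2]
  field_simp
  ring

/-- Differentiating `t^(γ - 2m) e^(c t + d / t) P(t)` gives `t^(γ - 2m - 2) e^(c t + d / t)` times
the next polynomial. -/
noncomputable def powExpKernelDerivPoly (γ c d : ℝ) : ℕ → ℝ[X]
  | 0 => 1
  | m + 1 => (C c * X ^ 2 + C (γ - 2 * m) * X - C d) * powExpKernelDerivPoly γ c d m
      + X ^ 2 * derivative (powExpKernelDerivPoly γ c d m)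

lemma hasDerivAt_powExpKernel_mul_eval (P : ℝ[X]) (ht : 0 < t) :
    HasDerivAt (fun s => powExpKernel K γ c d s * P.eval s)
      (powExpKernel K (γ - 2) c d t *
        ((C c * X ^ 2 + C γ * X - C d) * P + X ^ 2 * derivative P).eval t) t := by
  refine ((hasDerivAt_powExpKernel ht).mul (P.hasDerivAt t)).congr_deriv ?_
  have : powExpKernel K γ c d t = t ^ 2 * powExpKernel K (γ - 2) c d t := by
    rw [← powExpKernel_add_natCast 2 ht]; norm_num
  rw [this]
  simp only [eval_add, eval_mul, eval_sub, eval_pow, eval_C, eval_X]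
  ring

lemma iteratedDeriv_eqOn_powExpKernel_mul_eval {G : ℝ → ℝ}
    (hG : EqOn G (powExpKernel K γ c d) (Ioi 0)) (m : ℕ) :
    EqOn (iteratedDeriv m G)
      (fun t => powExpKernel K (γ - 2 * m) c d t * (powExpKernelDerivPoly γ c d m).eval t)
      (Ioi 0) := by
  induction m with
  | zero => simpa [powExpKernelDerivPoly] using hG
  | succ m ih =>
    intro t ht
    rw [iteratedDeriv_succ, (ih.eventuallyEq_of_mem (isOpen_Ioi.mem_nhds ht)).deriv_eq,
      (hasDerivAt_powExpKernel_mul_eval _ ht).deriv, powExpKernelDerivPoly]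
    push_cast
    ring_nf

end Derivatives

section Integrability

variable {K γ c d : ℝ}

lemma exp_neg_div_le_factorial_mul_pow {δ t : ℝ} (hδ : 0 < δ) (ht : 0 < t) (n : ℕ) :
    exp (-δ / t) ≤ n ! / δ ^ n * t ^ n := by
  rw [neg_div, exp_neg, inv_le_comm₀ (exp_pos _) (by positivity)]
  calc (n ! / δ ^ n * t ^ n)⁻¹ = (δ / t) ^ n / n ! := by rw [div_pow]; field_simp
    _ ≤ exp (δ / t) := pow_div_factorial_le_exp _ (div_pos hδ ht).le n

lemma integrableOn_powExpKernel (hc : c < 0) (hd : d < 0) :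
    IntegrableOn (powExpKernel K γ c d) (Ioi 0) := by
  obtain ⟨n, hn⟩ : ∃ n : ℕ, -1 < γ + n := by
    obtain ⟨n, hn⟩ := exists_nat_gt (-1 - γ)
    exact ⟨n, by linarith⟩
  have hmajor : IntegrableOn (fun t => |K| * (n ! / (-d) ^ n) * (t ^ (γ + n) * exp (c * t)))
      (Ioi 0) := by
    have h := integrableOn_rpow_mul_exp_neg_mul_rpow hn one_pos (neg_pos.2 hc)
    simp only [rpow_one, neg_neg] at h
    exact h.const_mul _
  have hmeas : Measurable (powExpKernel K γ c d) := by unfold powExpKernel; fun_prop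
  refine hmajor.mono' hmeas.aestronglyMeasurable
    ((ae_restrict_iff' measurableSet_Ioi).2 (ae_of_all _ fun t ht => ?_))
  have ht : 0 < t := ht
  have hexp := exp_neg_div_le_factorial_mul_pow (neg_pos.2 hd) ht n
  rw [neg_neg] at hexp
  calc ‖powExpKernel K γ c d t‖ = |K| * t ^ γ * (exp (c * t) * exp (d / t)) := by
        simp only [powExpKernel, exp_add, norm_mul, Real.norm_eq_abs,
          abs_of_pos (rpow_pos_of_pos ht γ), abs_of_pos (exp_pos _)]
    _ ≤ |K| * t ^ γ * (exp (c * t) * (n ! / (-d) ^ n * t ^ n)) := by gcongr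
    _ = |K| * (n ! / (-d) ^ n) * (t ^ (γ + n) * exp (c * t)) := by
        rw [rpow_add ht, rpow_natCast]; ring

lemma integrableOn_eval_mul_powExpKernel (P : ℝ[X]) (hc : c < 0) (hd : d < 0) :
    IntegrableOn (fun t => P.eval t * powExpKernel K γ c d t) (Ioi 0) := by
  have hsum : IntegrableOn
      (fun t => ∑ i ∈ Finset.range (P.natDegree + 1), powExpKernel (P.coeff i * K) (γ + i) c d t)
      (Ioi 0) :=
    integrable_finsetSum _ fun i _ => integrableOn_powExpKernel hc hd
  refine hsum.congr_fun (fun t ht => ?_) measurableSet_Ioi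
  simp only [eval_eq_sum_range, Finset.sum_mul, powExpKernel_add_natCast _ (mem_Ioi.1 ht)]
  refine Finset.sum_congr rfl fun i _ => ?_
  simp only [powExpKernel]
  ring

end Integrability

lemma ig_div_gammaPdf_eqOn {a b α β : ℝ} (hb : b ≠ 0) (hβ : 0 < β) :
    EqOn (fun s => ig a b s / gammaPdf α β s)
      (powExpKernel (√(a / (2 * π)) * exp (a / b) * (β ^ (α + 1) / Gamma (α + 1))⁻¹)
        (-(α + 3 / 2)) (β - a / (2 * b ^ 2)) (-(a / 2))) (Ioi 0) := by
  intro t ht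
  dsimp only
  rw [div_eq_mul_inv (ig a b t), ig_eq_powExpKernel hb ht, gammaPdf_eq_powExpKernel hβ ht,
    powExpKernel_inv ht.le, powExpKernel_mul ht]
  congr 1 <;> ring

theorem integrable_weighted_iteratedDeriv_general (a b α β : ℝ) (ha : 0 < a) (hb : 0 < b)
    (hβ : 0 < β) (hβ2 : β < a / b ^ 2) (m : ℕ) :
    IntegrableOn
      (fun t : ℝ =>
        t ^ m * (iteratedDeriv m (fun s : ℝ => ig a b s / gammaPdf α β s) t) ^ 2 *
          gammaPdf α β t)
      (Set.Ioi 0) := by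
  obtain ⟨K, hK⟩ : ∃ K, EqOn (fun s => ig a b s / gammaPdf α β s)
      (powExpKernel K (-(α + 3 / 2)) (β - a / (2 * b ^ 2)) (-(a / 2))) (Ioi 0) :=
    ⟨_, ig_div_gammaPdf_eqOn hb.ne' hβ⟩
  have hF := iteratedDeriv_eqOn_powExpKernel_mul_eval hK m
  set γ := -(α + 3 / 2) - 2 * (m : ℝ)
  set c := β - a / (2 * b ^ 2)
  set P := powExpKernelDerivPoly (-(α + 3 / 2)) c (-(a / 2)) m
  have hc : c + c + -β < 0 := by
    have : a / (2 * b ^ 2) + a / (2 * b ^ 2) = a / b ^ 2 := by ring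
    linarith
  have hd : -(a / 2) + -(a / 2) + 0 < 0 := by linarith
  refine (integrableOn_eval_mul_powExpKernel (X ^ m * P ^ 2) hc hd
    (K := K * K * (β ^ (α + 1) / Gamma (α + 1))) (γ := γ + γ + α)).congr_fun
    (fun t ht => ?_) measurableSet_Ioi
  dsimp only
  rw [hF ht, gammaPdf_eq_powExpKernel hβ ht, ← powExpKernel_mul ht, ← powExpKernel_mul ht]
  simp only [eval_mul, eval_pow, eval_X]
  ring

theorem integrable_weighted_iteratedDeriv (a b α β : ℝ) (ha : 0 < a) (hb : 0 < b)
    (hα : -1 < α) (hβ : 0 < β) (hβ2 : β < a / b ^ 2) (m : ℕ) :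
    IntegrableOn
      (fun t : ℝ =>
        t ^ m * (iteratedDeriv m (fun s : ℝ => ig a b s / gammaPdf α β s) t) ^ 2 *
          gammaPdf α β t)
      (Set.Ioi 0) :=
  integrable_weighted_iteratedDeriv_general a b α β ha hb hβ hβ2 m
end

section
/- Let a, b > 0, α > −1, and β = a/b², and let F(t) = g(t)/f_{α,β}(t) for t > 0, where g is the inverse Gaussian density IG(a,b) and f_{α,β} the Gamma density. Then for every integer m ≥ 0, the function t ↦ t^m · (F^{(m)}(t))² · f_{α,β}(t) is integrable on (0, ∞) if and only if α > m − 2. -/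
open MeasureTheory Real

/-!
On `(0, ∞)` the ratio `F = g / f_{α,β}` is a constant times `t^{-3/2-α} e^{βt/2 - a/(2t)}`,
whose logarithmic derivative is a quadratic polynomial `r` in `1/t`. Hence `F^{(m)}(t) = F(t) Q_m(1/t)` for
polynomials `Q_m` with `Q_m(0) = r(0)^m = (β/2)^m ≠ 0`, and the weighted integrand equals a
positive constant times `t^{m-3-α} e^{-a/t} Q_m(1/t)²`. Near `0` the factor `e^{-a/t}` beats every
power of `1/t`; near `∞` the integrand is `Θ(t^{m-3-α})`, integrable iff `m - 3 - α < -1`.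
-/

open Filter Topology Set Asymptotics Polynomial

-- The term `X ^ 2 * derivative` comes from `d/dt Q(1/t) = -t⁻² Q'(1/t)`.
noncomputable def iteratedDerivFactor (r : ℝ[X]) : ℕ → ℝ[X]
  | 0 => 1
  | m + 1 => r * iteratedDerivFactor r m - X ^ 2 * derivative (iteratedDerivFactor r m)

theorem iteratedDerivFactor_eval_zero (r : ℝ[X]) (m : ℕ) :
    (iteratedDerivFactor r m).eval 0 = r.eval 0 ^ m := by
  induction m with
  | zero => simp [iteratedDerivFactor]
  | succ m ih => simp [iteratedDerivFactor, ih, pow_succ, mul_comm]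

theorem iteratedDeriv_eq_mul_eval_iteratedDerivFactor {f : ℝ → ℝ} {r : ℝ[X]}
    (hf : ∀ t, 0 < t → HasDerivAt f (f t * r.eval t⁻¹) t) (m : ℕ) {t : ℝ} (ht : 0 < t) :
    iteratedDeriv m f t = f t * (iteratedDerivFactor r m).eval t⁻¹ := by
  induction m generalizing t with
  | zero => simp [iteratedDerivFactor]
  | succ m ih =>
    have h_eq : iteratedDeriv m f =ᶠ[𝓝 t] fun s => f s * (iteratedDerivFactor r m).eval s⁻¹ := by
      filter_upwards [Ioi_mem_nhds ht] with s hs using ih hs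
    have h_deriv : HasDerivAt (fun s => f s * (iteratedDerivFactor r m).eval s⁻¹) _ t :=
      (hf t ht).mul (((iteratedDerivFactor r m).hasDerivAt t⁻¹).comp t (hasDerivAt_inv ht.ne'))
    rw [iteratedDeriv_succ, h_eq.deriv_eq, h_deriv.deriv, iteratedDerivFactor]
    simp only [eval_sub, eval_mul, eval_pow, eval_X]
    field_simp
    ring

theorem hasDerivAt_rpow_mul_exp_sub_div (p l c : ℝ) {t : ℝ} (ht : 0 < t) :
    HasDerivAt (fun t => t ^ p * exp (l * t - c / t))
      (t ^ p * exp (l * t - c / t) * (C l + C p * X + C c * X ^ 2).eval t⁻¹) t := by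
  have h_pow : HasDerivAt (fun t => t ^ p) (p * t ^ (p - 1)) t :=
    hasDerivAt_rpow_const (Or.inl ht.ne')
  have h_exp : HasDerivAt (fun t => l * t - c / t) (l * 1 - c * -(t ^ 2)⁻¹) t := by
    simp only [div_eq_mul_inv]
    exact ((hasDerivAt_id' t).const_mul l).sub ((hasDerivAt_inv ht.ne').const_mul c)
  refine (h_pow.mul h_exp.exp).congr_deriv ?_
  rw [rpow_sub_one ht.ne']
  simp only [eval_add, eval_mul, eval_C, eval_X, eval_pow]
  field_simp
  ring

theorem integrableOn_Ioi_rpow_mul_iff_of_tendsto {s L : ℝ} {g : ℝ → ℝ}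
    (hg : ContinuousOn g (Ioi 0)) (hL : L ≠ 0) (h_atTop : Tendsto g atTop (𝓝 L))
    (h_zero : Tendsto (fun t => t ^ s * g t) (𝓝[>] 0) (𝓝 0)) :
    IntegrableOn (fun t => t ^ s * g t) (Ioi 0) ↔ s < -1 := by
  have h_rpow : ContinuousOn (fun t : ℝ => t ^ s) (Ioi 0) :=
    continuousOn_id.rpow_const fun t ht => Or.inl (ne_of_gt ht)
  have h_cont : ContinuousOn (fun t => t ^ s * g t) (Ioi 0) := h_rpow.mul hg
  have h_theta : (fun t => t ^ s * g t) =Θ[atTop] (fun t => t ^ s) := by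
    simpa using (isTheta_refl (fun t : ℝ => t ^ s) atTop).mul
      (((isEquivalent_const_iff_tendsto hL).mpr h_atTop).isTheta.trans
        (isTheta_const_const hL one_ne_zero))
  have h_meas {f : ℝ → ℝ} (hf : ContinuousOn f (Ioi 0)) : StronglyMeasurableAtFilter f atTop :=
    ⟨Ioi 0, Ioi_mem_atTop 0, hf.aestronglyMeasurable measurableSet_Ioi⟩
  rw [integrableOn_Ioi_iff_integrableAtFilter_atTop_nhdsWithin,
    ← integrableAtFilter_rpow_atTop_iff]
  refine ⟨fun h => h_theta.isBigO_symm.integrableAtFilter (h_meas h_rpow) h.1,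
    fun h => ⟨?_, ?_, ?_⟩⟩
  · exact h_theta.isBigO.integrableAtFilter (h_meas h_cont) h
  · exact h_zero.integrableAtFilter
      (h_cont.stronglyMeasurableAtFilter_nhdsWithin measurableSet_Ioi 0)
      (volume.finiteAt_nhdsWithin 0 _)
  · exact h_cont.locallyIntegrableOn measurableSet_Ioi

theorem tendsto_rpow_mul_eval_mul_exp_neg_atTop (s : ℝ) {a : ℝ} (ha : 0 < a) (P : ℝ[X]) :
    Tendsto (fun u => u ^ s * (P.eval u * exp (-a * u))) atTop (𝓝 0) := by
  have hP : (fun u => P.eval u) =O[atTop] (fun u : ℝ => u ^ (P.natDegree : ℝ)) := by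
    refine (isBigO_atTop_of_degree_le P (X ^ P.natDegree) ?_).congr_right fun u => ?_
    · rw [degree_X_pow]; exact degree_le_natDegree
    · simp
  refine (((isBigO_refl (fun u : ℝ => u ^ s) atTop).mul
    (hP.mul (isBigO_refl (fun u => exp (-a * u)) atTop))).trans_tendsto ?_)
  refine (tendsto_rpow_mul_exp_neg_mul_atTop_nhds_zero (s + P.natDegree) a ha).congr' ?_
  filter_upwards [eventually_gt_atTop 0] with u hu
  rw [rpow_add hu]; ring

theorem tendsto_rpow_mul_exp_neg_div_mul_eval_inv_nhdsGT_zero (s : ℝ) {a : ℝ} (ha : 0 < a)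
    (P : ℝ[X]) :
    Tendsto (fun t => t ^ s * (exp (-a / t) * P.eval t⁻¹)) (𝓝[>] 0) (𝓝 0) := by
  refine ((tendsto_rpow_mul_eval_mul_exp_neg_atTop (-s) ha P).comp
    tendsto_inv_nhdsGT_zero).congr' ?_
  filter_upwards [self_mem_nhdsWithin] with t (ht : 0 < t)
  simp only [Function.comp_apply]
  rw [inv_rpow ht.le, rpow_neg ht.le, inv_inv, div_eq_mul_inv]; ring

theorem integrableOn_Ioi_rpow_mul_exp_neg_div_mul_eval_inv_iff {s a : ℝ} (ha : 0 < a)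
    {P : ℝ[X]} (hP : P.eval 0 ≠ 0) :
    IntegrableOn (fun t => t ^ s * (exp (-a / t) * P.eval t⁻¹)) (Ioi 0) ↔ s < -1 := by
  refine integrableOn_Ioi_rpow_mul_iff_of_tendsto ?_ hP ?_
    (tendsto_rpow_mul_exp_neg_div_mul_eval_inv_nhdsGT_zero s ha P)
  · fun_prop (disch := intro t ht; exact ne_of_gt ht)
  · have h : Tendsto (fun u => exp (-a * u) * P.eval u) (𝓝 0) (𝓝 (P.eval 0)) := by
      have := (show Continuous (fun u => exp (-a * u) * P.eval u) by fun_prop).tendsto 0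
      simpa using this
    exact (h.comp tendsto_inv_atTop_zero).congr fun t => by simp [div_eq_mul_inv]

theorem gammaPdf_eq_mul_rpow_mul_exp {α β t : ℝ} (hβ : 0 < β) (ht : 0 < t) :
    gammaPdf α β t = β ^ (α + 1) / Gamma (α + 1) * (t ^ α * exp (-β * t)) := by
  rw [gammaPdf, mul_rpow hβ.le ht.le, rpow_add hβ, rpow_one]
  ring

theorem ig_eq_mul_rpow_mul_exp {a b t : ℝ} (ha : 0 < a) (hb : 0 < b) (ht : 0 < t) :
    ig a b t = √(a / (2 * π)) * exp (a / b) * (t ^ (-(3 / 2) : ℝ) *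
      exp (-(a / b ^ 2 / 2) * t - a / 2 / t)) := by
  have h_sqrt : √(t ^ 3) = t ^ (3 / 2 : ℝ) := by
    rw [sqrt_eq_rpow, ← rpow_natCast, ← rpow_mul ht.le]
    norm_num
  have h_exponent : -(a * (t - b) ^ 2) / (2 * b ^ 2 * t) =
      a / b + (-(a / b ^ 2 / 2) * t - a / 2 / t) := by
    field_simp
    ring
  rw [ig, div_mul_eq_div_div, sqrt_div' _ (by positivity), h_sqrt, rpow_neg ht.le, h_exponent,
    exp_add]
  ring

theorem ig_div_gammaPdf_eq_mul_rpow_mul_exp {a b α t : ℝ} (ha : 0 < a) (hb : 0 < b)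
    (ht : 0 < t) :
    ig a b t / gammaPdf α (a / b ^ 2) t =
      √(a / (2 * π)) * exp (a / b) / ((a / b ^ 2) ^ (α + 1) / Gamma (α + 1)) *
        (t ^ (-(3 / 2) - α) * exp (a / b ^ 2 / 2 * t - a / 2 / t)) := by
  have hβ : 0 < a / b ^ 2 := by positivity
  rw [ig_eq_mul_rpow_mul_exp ha hb ht, gammaPdf_eq_mul_rpow_mul_exp hβ ht, mul_div_mul_comm,
    mul_div_mul_comm, ← rpow_sub ht, ← exp_sub]
  ring_nf

theorem sq_ig_div_gammaPdf_mul_gammaPdf {a b α t : ℝ} (ha : 0 < a) (hb : 0 < b) (ht : 0 < t) :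
    (ig a b t / gammaPdf α (a / b ^ 2) t) ^ 2 * gammaPdf α (a / b ^ 2) t =
      a * exp (2 * a / b) * Gamma (α + 1) / (2 * π * (a / b ^ 2) ^ (α + 1)) *
        (t ^ (-3 - α) * exp (-a / t)) := by
  have hβ : 0 < a / b ^ 2 := by positivity
  rcases eq_or_ne (Gamma (α + 1)) 0 with hΓ | hΓ
  · simp [gammaPdf, hΓ]
  have h_pow : (t ^ (-(3 / 2) - α)) ^ 2 * t ^ α = t ^ (-3 - α) := by
    rw [← rpow_natCast, ← rpow_mul ht.le, ← rpow_add ht]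
    norm_num
    ring_nf
  have h_exp :
      exp (a / b ^ 2 / 2 * t - a / 2 / t) ^ 2 * exp (-(a / b ^ 2) * t) = exp (-a / t) := by
    rw [← exp_nat_mul, ← exp_add]
    congr 1
    field_simp
    ring
  have h_sqrt : √(a / (2 * π)) ^ 2 = a / (2 * π) := sq_sqrt (by positivity)
  have h_exp' : exp (2 * a / b) = exp (a / b) ^ 2 := by rw [← exp_nat_mul]; ring_nf
  rw [ig_div_gammaPdf_eq_mul_rpow_mul_exp ha hb ht, gammaPdf_eq_mul_rpow_mul_exp hβ ht, ← h_pow,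
    ← h_exp, h_exp', mul_pow, mul_pow, div_pow, mul_pow, h_sqrt]
  field_simp

theorem hasDerivAt_ig_div_gammaPdf {a b α t : ℝ} (ha : 0 < a) (hb : 0 < b) (ht : 0 < t) :
    HasDerivAt (fun s => ig a b s / gammaPdf α (a / b ^ 2) s)
      (ig a b t / gammaPdf α (a / b ^ 2) t *
        (C (a / b ^ 2 / 2) + C (-(3 / 2) - α) * X + C (a / 2) * X ^ 2).eval t⁻¹) t := by
  have h_eq : (fun s => ig a b s / gammaPdf α (a / b ^ 2) s) =ᶠ[𝓝 t] fun s =>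
      √(a / (2 * π)) * exp (a / b) / ((a / b ^ 2) ^ (α + 1) / Gamma (α + 1)) *
        (s ^ (-(3 / 2) - α) * exp (a / b ^ 2 / 2 * s - a / 2 / s)) := by
    filter_upwards [Ioi_mem_nhds ht] with s hs
    exact ig_div_gammaPdf_eq_mul_rpow_mul_exp ha hb hs
  rw [h_eq.hasDerivAt_iff, ig_div_gammaPdf_eq_mul_rpow_mul_exp ha hb ht, mul_assoc]
  exact (hasDerivAt_rpow_mul_exp_sub_div _ _ _ ht).const_mul _

theorem integrable_weighted_iteratedDeriv_limit_case (a b α : ℝ) (ha : 0 < a) (hb : 0 < b)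
    (hα : -1 < α) (m : ℕ) :
    IntegrableOn
      (fun t : ℝ =>
        t ^ m * (iteratedDeriv m (fun s : ℝ => ig a b s / gammaPdf α (a / b ^ 2) s) t) ^ 2 *
          gammaPdf α (a / b ^ 2) t)
      (Set.Ioi 0) ↔ (m : ℝ) - 2 < α := by
  set Q := iteratedDerivFactor (C (a / b ^ 2 / 2) + C (-(3 / 2) - α) * X + C (a / 2) * X ^ 2) m
  set c := a * exp (2 * a / b) * Gamma (α + 1) / (2 * π * (a / b ^ 2) ^ (α + 1))
  have hc : c ≠ 0 := by
    have := Gamma_pos_of_pos (show 0 < α + 1 by linarith)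
    positivity
  have hQ : (Q ^ 2).eval 0 ≠ 0 := by
    simp only [Q, eval_pow, iteratedDerivFactor_eval_zero, eval_add, eval_mul, eval_C, eval_X,
      mul_zero, add_zero]
    positivity
  rw [integrableOn_congr_fun (g := fun t =>
      c * (t ^ ((m : ℝ) - 3 - α) * (exp (-a / t) * (Q ^ 2).eval t⁻¹))) ?_ measurableSet_Ioi,
    IntegrableOn, integrable_const_mul_iff (isUnit_iff_ne_zero.mpr hc), ← IntegrableOn,
    integrableOn_Ioi_rpow_mul_exp_neg_div_mul_eval_inv_iff ha hQ]
  · constructor <;> intro h <;> linarith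
  · intro t (ht : 0 < t)
    have h_pow : t ^ m * t ^ (-3 - α) = t ^ ((m : ℝ) - 3 - α) := by
      rw [← rpow_natCast, ← rpow_add ht]
      ring_nf
    dsimp only
    rw [iteratedDeriv_eq_mul_eval_iteratedDerivFactor
      (fun s hs => hasDerivAt_ig_div_gammaPdf ha hb hs) m ht]
    calc _ = t ^ m * ((ig a b t / gammaPdf α (a / b ^ 2) t) ^ 2 * gammaPdf α (a / b ^ 2) t) *
          Q.eval t⁻¹ ^ 2 := by ring
      _ = _ := by rw [sq_ig_div_gammaPdf_mul_gammaPdf ha hb ht, eval_pow, ← h_pow]; ring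
end

section
/- Let α > −1 and β ∈ ℝ, let (m_j)_{j≥1} be a sequence of real numbers, and define B_0^{(α)} = 1 and B_k^{(α)} = 1 + Σ_{j=1}^k C(k,j) (−β)^j m_j / ((α+j)_j) for k ≥ 1, where (α+j)_j = Π_{l=1}^j (α+l). Then for every k ≥ 1: B_k^{(α)} = Σ_{j=1}^k C(k,j) (−1)^{j+1} B_{k−j}^{(α)} + (−β)^k m_k / ((α+k)_k). -/
/-!
`B^{(α)}` is the binomial transform of `d_j = (-β)^j m_j / (α+j)_j` (with `d_0 = 1`). Binomial
inversion writes `d_k` as the alternating binomial sum `∑_j (-1)^j C(k,j) B_{k-j}`, and isolating its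
`j = 0` term is the recursion.
-/

/-- The coefficient `B_k^{(α)} = 1 + ∑_{j=1}^k C(k,j) (-β)^j m_j / (α+j)_j` with
`(α+j)_j = ∏_{l=1}^j (α+l)`; in particular `B_0^{(α)} = 1`. -/
noncomputable def coefB (α β : ℝ) (m : ℕ → ℝ) (k : ℕ) : ℝ :=
  1 + ∑ j ∈ Finset.Icc 1 k,
    (k.choose j : ℝ) * (-β) ^ j * m j / ∏ l ∈ Finset.Icc 1 j, (α + (l : ℝ))

open Finset

theorem Nat.choose_mul_choose_sub_comm (n i j : ℕ) :
    n.choose j * (n - j).choose i = n.choose i * (n - i).choose j := by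
  have hj := Nat.choose_mul (n := n) (k := i + j) (Nat.le_add_left j i)
  have hi := Nat.choose_mul (n := n) (k := i + j) (Nat.le_add_right i j)
  rw [Nat.add_sub_cancel] at hj
  rw [Nat.add_sub_cancel_left] at hi
  rw [← hj, ← hi, Nat.choose_symm_add]

theorem Finset.sum_range_succ_eq_add_sum_Icc {M : Type*} [AddCommMonoid M] (f : ℕ → M) (n : ℕ) :
    ∑ i ∈ range (n + 1), f i = f 0 + ∑ i ∈ Icc 1 n, f i := by
  rw [range_eq_Ico, sum_eq_sum_Ico_succ_bot n.succ_pos]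
  rfl

section BinomialTransform

variable {R : Type*} [CommRing R]

theorem alternating_sum_range_choose (n : ℕ) :
    ∑ j ∈ range (n + 1), (-1 : R) ^ j * n.choose j = if n = 0 then 1 else 0 := by
  have := congrArg (Int.cast : ℤ → R) (Int.alternating_sum_range_choose (n := n))
  push_cast at this
  simpa using this

def binomialTransform (c : ℕ → R) (n : ℕ) : R :=
  ∑ i ∈ range (n + 1), n.choose i * c i

theorem alternating_sum_choose_mul_binomialTransform (c : ℕ → R) (n : ℕ) :
    ∑ j ∈ range (n + 1), (-1) ^ j * n.choose j * binomialTransform c (n - j) = c n := by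
  calc ∑ j ∈ range (n + 1), (-1) ^ j * n.choose j * binomialTransform c (n - j)
      = ∑ j ∈ range (n + 1), ∑ i ∈ range (n - j + 1),
          (-1) ^ j * ((n.choose i * (n - i).choose j : ℕ) : R) * c i := by
        refine sum_congr rfl fun j _ => ?_
        rw [binomialTransform, mul_sum]
        refine sum_congr rfl fun i _ => ?_
        rw [← Nat.choose_mul_choose_sub_comm]
        push_cast
        ring
    _ = ∑ i ∈ range (n + 1), ∑ j ∈ range (n - i + 1),
          (-1) ^ j * ((n.choose i * (n - i).choose j : ℕ) : R) * c i := by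
        refine sum_comm' fun j i => ?_
        simp only [mem_range]
        omega
    _ = ∑ i ∈ range (n + 1), n.choose i * c i * if n - i = 0 then 1 else 0 := by
        refine sum_congr rfl fun i _ => ?_
        rw [← alternating_sum_range_choose, mul_sum]
        exact sum_congr rfl fun j _ => by push_cast; ring
    _ = c n := by
        rw [sum_eq_single_of_mem n (self_mem_range_succ n) fun i hi hin => ?_]
        · simp
        · rw [mem_range] at hi
          rw [if_neg (by omega), mul_zero]

theorem binomialTransform_eq_sum_Icc_add (c : ℕ → R) (n : ℕ) :
    binomialTransform c n =
      ∑ j ∈ Icc 1 n, n.choose j * (-1) ^ (j + 1) * binomialTransform c (n - j) + c n := by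
  have h := alternating_sum_choose_mul_binomialTransform c n
  rw [sum_range_succ_eq_add_sum_Icc] at h
  simp only [pow_zero, Nat.choose_zero_right, Nat.cast_one, one_mul, Nat.sub_zero] at h
  have hneg : ∑ j ∈ Icc 1 n, n.choose j * (-1) ^ (j + 1) * binomialTransform c (n - j) =
      -∑ j ∈ Icc 1 n, (-1) ^ j * n.choose j * binomialTransform c (n - j) := by
    rw [← sum_neg_distrib]
    exact sum_congr rfl fun j _ => by ring
  rw [hneg, ← h]
  abel

end BinomialTransform

noncomputable def scaledMoment (α β : ℝ) (m : ℕ → ℝ) (j : ℕ) : ℝ :=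
  if j = 0 then 1 else (-β) ^ j * m j / ∏ l ∈ Icc 1 j, (α + (l : ℝ))

theorem coefB_eq_binomialTransform (α β : ℝ) (m : ℕ → ℝ) :
    coefB α β m = binomialTransform (scaledMoment α β m) := by
  funext k
  rw [coefB, binomialTransform, sum_range_succ_eq_add_sum_Icc]
  congr 1
  · simp [scaledMoment]
  · refine sum_congr rfl fun j hj => ?_
    rw [scaledMoment, if_neg (Nat.one_le_iff_ne_zero.1 (mem_Icc.1 hj).1)]
    ring

theorem coefB_recursion_general (α β : ℝ) (m : ℕ → ℝ) (k : ℕ) (hk : 1 ≤ k) :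
    coefB α β m k =
      (∑ j ∈ Finset.Icc 1 k, (k.choose j : ℝ) * (-1) ^ (j + 1) * coefB α β m (k - j)) +
        (-β) ^ k * m k / ∏ l ∈ Finset.Icc 1 k, (α + (l : ℝ)) := by
  rw [coefB_eq_binomialTransform, binomialTransform_eq_sum_Icc_add, scaledMoment,
    if_neg (by omega)]

theorem coefB_recursion (α β : ℝ) (hα : -1 < α) (m : ℕ → ℝ) (k : ℕ) (hk : 1 ≤ k) :
    coefB α β m k =
      (∑ j ∈ Finset.Icc 1 k, (k.choose j : ℝ) * (-1) ^ (j + 1) * coefB α β m (k - j)) +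
        (-β) ^ k * m k / ∏ l ∈ Finset.Icc 1 k, (α + (l : ℝ)) :=
  coefB_recursion_general α β m k hk
end
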